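/- S(⊑^up(id), ⊒^up(id)) is good for saturation: saturating a tree automaton by adding a transition ⟨p,σ,r₁…rₙ⟩ whenever there exists ⟨p',σ,r₁'…rₙ'⟩ ∈ δ with p ⊑^up(id) p' and rᵢ' ⊑^up(id) rᵢ for all i (note the direction on targets) preserves the language. -/

import Mathlib

/-- Trees over an alphabet: a node label and a list of children. -/
inductive TTree (Sym : Type) : Type where
  | node : Sym → List (TTree Sym) → TTree Sym

/-- A top-down tree automaton: transitions and initial states. -/
structure TDTA (Q Sym : Type) where
  delta : Set (Q × Sym × List Q)
  init : Set Q

/-- `Accepts δ q t`: there is a run of the transition relation `δ` on the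
closed tree `t` rooted at state `q` (leaf rules are transitions with empty target list). -/
inductive Accepts {Q Sym : Type} (δ : Set (Q × Sym × List Q)) : Q → TTree Sym → Prop where
  | node {q : Q} {a : Sym} {qs : List Q} {ts : List (TTree Sym)}
      (hmem : (q, a, qs) ∈ δ) (hlen : qs.length = ts.length)
      (hchild : ∀ i : Fin qs.length, Accepts δ (qs.get i) (ts.get (Fin.cast hlen i))) :
      Accepts δ q (TTree.node a ts)

/-- The downward language of a state. -/
def Dlang {Q Sym : Type} (δ : Set (Q × Sym × List Q)) (q : Q) : Set (TTree Sym) :=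
  {t | Accepts δ q t}

/-- The language of a tree automaton. -/
def Lang {Q Sym : Type} (A : TDTA Q Sym) : Set (TTree Sym) :=
  {t | ∃ q ∈ A.init, Accepts A.delta q t}

/-- The `S`-saturated automaton: add every potential transition `t'` for which
some existing transition `t ∈ δ` satisfies `t' S t`. -/
def satAut {Q Sym : Type} (A : TDTA Q Sym)
    (S : Q × Sym × List Q → Q × Sym × List Q → Prop) : TDTA Q Sym :=
  ⟨{t' | ∃ t ∈ A.delta, S t' t}, A.init⟩

/-- The pruned automaton: keep only the transitions that are maximal w.r.t. `P`. -/
def pruneAut {Q Sym : Type} (A : TDTA Q Sym)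
    (P : Q × Sym × List Q → Q × Sym × List Q → Prop) : TDTA Q Sym :=
  ⟨{t | t ∈ A.delta ∧ ∀ t' ∈ A.delta, ¬ P t t'}, A.init⟩

/-- The quotient automaton by an equivalence (setoid) on states. -/
def quotAut {Q Sym : Type} (A : TDTA Q Sym) (s : Setoid Q) : TDTA (Quotient s) Sym :=
  ⟨{t | ∃ r ∈ A.delta, t = (Quotient.mk s r.1, r.2.1, r.2.2.map (Quotient.mk s))},
   {x | ∃ q ∈ A.init, x = Quotient.mk s q}⟩

/-- `Srel Rs Rt` compares two transitions over the same symbol: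
sources by `Rs`, target tuples componentwise by `Rt`. -/
def Srel {Q Sym : Type} (Rs Rt : Q → Q → Prop) :
    Q × Sym × List Q → Q × Sym × List Q → Prop :=
  fun t' t => t'.2.1 = t.2.1 ∧ Rs t'.1 t.1 ∧ List.Forall₂ Rt t'.2.2 t.2.2

/-- Runs with open leaves: trees over `Sym ⊕ Q`, where a leaf labelled by a state
`q` (a "hole") is read exactly at state `q`.  `AcceptsH δ q t` means there is such
a (partial) run of `δ` on `t` rooted at `q`. -/
inductive AcceptsH {Q Sym : Type} (δ : Set (Q × Sym × List Q)) :
    Q → TTree (Sym ⊕ Q) → Prop where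
  | hole (q : Q) : AcceptsH δ q (TTree.node (Sum.inr q) [])
  | node {q : Q} {a : Sym} {qs : List Q} {ts : List (TTree (Sym ⊕ Q))}
      (hmem : (q, a, qs) ∈ δ) (hlen : qs.length = ts.length)
      (hchild : ∀ i : Fin qs.length, AcceptsH δ (qs.get i) (ts.get (Fin.cast hlen i))) :
      AcceptsH δ q (TTree.node (Sum.inl a) ts)

/-- One-hole contexts over `Sym ⊕ Q`. -/
inductive Ctx (Q Sym : Type) : Type where
  | hole : Ctx Q Sym
  | node : Sym → List (TTree (Sym ⊕ Q)) → Ctx Q Sym → List (TTree (Sym ⊕ Q)) → Ctx Q Sym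

/-- Filling the hole of a context with a tree. -/
def fill {Q Sym : Type} : Ctx Q Sym → TTree (Sym ⊕ Q) → TTree (Sym ⊕ Q)
  | Ctx.hole, t => t
  | Ctx.node a l C r, t => TTree.node (Sum.inl a) (l ++ fill C t :: r)

/-- A state leaf. -/
def leafQ {Q Sym : Type} (q : Q) : TTree (Sym ⊕ Q) := TTree.node (Sum.inr q) []

/-- `TreeRel R` relates two trees with identical symbol structure whose state
leaves are componentwise related by `R`. -/
inductive TreeRel {Q Sym : Type} (R : Q → Q → Prop) :
    TTree (Sym ⊕ Q) → TTree (Sym ⊕ Q) → Prop where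
  | leaf {p q : Q} : R p q →
      TreeRel R (TTree.node (Sum.inr p) []) (TTree.node (Sum.inr q) [])
  | node {a : Sym} {ts ts' : List (TTree (Sym ⊕ Q))} (hlen : ts.length = ts'.length)
      (h : ∀ i : Fin ts.length, TreeRel R (ts.get i) (ts'.get (Fin.cast hlen i))) :
      TreeRel R (TTree.node (Sum.inl a) ts) (TTree.node (Sum.inl a) ts')

/-- `CtxRel R` relates two contexts with identical symbol structure whose side
branches are `TreeRel R`-related. -/
inductive CtxRel {Q Sym : Type} (R : Q → Q → Prop) : Ctx Q Sym → Ctx Q Sym → Prop where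
  | hole : CtxRel R Ctx.hole Ctx.hole
  | node {a : Sym} {l r l' r' : List (TTree (Sym ⊕ Q))} {C C' : Ctx Q Sym}
      (hl : List.Forall₂ (TreeRel R) l l') (hC : CtxRel R C C')
      (hr : List.Forall₂ (TreeRel R) r r') :
      CtxRel R (Ctx.node a l C r) (Ctx.node a l' C' r')

/-- A tree (with open state leaves) is accepted by the automaton. -/
def AccLangH {Q Sym : Type} (A : TDTA Q Sym) (t : TTree (Sym ⊕ Q)) : Prop :=
  ∃ i ∈ A.init, AcceptsH A.delta i t

/-- Upward trace inclusion parameterized by a relation `R` on side-branch states: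
every accepting run placing `p` at the hole of a context can be replaced by an
accepting run placing `q` at the hole of an `R`-related context. -/
def upLe {Q Sym : Type} (A : TDTA Q Sym) (R : Q → Q → Prop) (p q : Q) : Prop :=
  ∀ C : Ctx Q Sym, AccLangH A (fill C (leafQ p)) →
    ∃ C' : Ctx Q Sym, CtxRel R C C' ∧ AccLangH A (fill C' (leafQ q))

/-- Upward trace equivalence parameterized by `R`. -/
def upEq {Q Sym : Type} (A : TDTA Q Sym) (R : Q → Q → Prop) (p q : Q) : Prop :=
  upLe A R p q ∧ upLe A R q p

/-- Upward trace inclusion parameterized by identity: every accepting run using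
`p` at an open leaf can be replaced by one using `q` there, agreeing with the
original run on all other (open) leaves. -/
def upLeId {Q Sym : Type} (A : TDTA Q Sym) (p q : Q) : Prop :=
  ∀ C : Ctx Q Sym, AccLangH A (fill C (leafQ p)) → AccLangH A (fill C (leafQ q))

/-!
A run of the saturated automaton is turned into a run of `A` top-down. Call an open tree `u`
upward-included in `v` if `v` can replace `u` in every accepting context; `upLeId A p q` is this
relation between the leaves `p` and `q`, and it is a preorder compatible with contexts. If a
saturated transition `⟨p,σ,r₁…rₙ⟩` was added because of `⟨p',σ,r₁'…rₙ'⟩ ∈ δ`, then in any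
accepting context `p ≤ p' ≤ σ(r₁'…rₙ') ≤ σ(r₁…rₙ) ≤ σ(t₁…tₙ)`, the second step by plugging in
the transition itself and the last one by induction on the subtrees `tᵢ` read from `rᵢ`.
-/

namespace List

theorem forall₂_iff_exists_get {α β : Type*} {R : α → β → Prop} {l₁ : List α} {l₂ : List β} :
    Forall₂ R l₁ l₂ ↔
      ∃ h : l₁.length = l₂.length, ∀ i : Fin l₁.length, R (l₁.get i) (l₂.get (Fin.cast h i)) :=
  forall₂_iff_get.trans
    ⟨fun ⟨h, hget⟩ => ⟨h, fun i => hget i i.2 (h ▸ i.2)⟩,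
      fun ⟨h, hget⟩ => ⟨h, fun i _ _ => hget ⟨i, _⟩⟩⟩

theorem forall₂_append_cons_of_imp {α β : Type*} {R : α → β → Prop} {x y : β}
    (hxy : ∀ a, R a x → R a y) {r : List β} :
    ∀ {l : List β} {as : List α}, Forall₂ R as (l ++ x :: r) → Forall₂ R as (l ++ y :: r)
  | [], _, .cons h hr => .cons (hxy _ h) hr
  | _ :: _, _, .cons h hl => .cons h (forall₂_append_cons_of_imp hxy hl)

end List

open List

namespace TTree

variable {α β : Type}

def map (f : α → β) : TTree α → TTree β
  | node a ts => node (f a) (ts.map (map f))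

theorem map_node (f : α → β) (a : α) (ts : List (TTree α)) :
    (node a ts).map f = node (f a) (ts.map (map f)) := by
  rw [map]

end TTree

namespace Ctx

variable {Q Sym : Type}

def comp : Ctx Q Sym → Ctx Q Sym → Ctx Q Sym
  | hole, D => D
  | node a l C r, D => node a l (comp C D) r

theorem fill_comp (C D : Ctx Q Sym) (t : TTree (Sym ⊕ Q)) :
    fill (comp C D) t = fill C (fill D t) := by
  induction C with
  | hole => rfl
  | node a l C r ih => simp only [comp, fill, ih]

end Ctx

section Runs

variable {Q Sym : Type} {δ : Set (Q × Sym × List Q)}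

theorem accepts_node_iff {q : Q} {a : Sym} {ts : List (TTree Sym)} :
    Accepts δ q (.node a ts) ↔ ∃ qs, (q, a, qs) ∈ δ ∧ Forall₂ (Accepts δ) qs ts := by
  constructor
  · rintro ⟨hmem, hlen, hchild⟩
    exact ⟨_, hmem, forall₂_iff_exists_get.2 ⟨hlen, hchild⟩⟩
  · rintro ⟨qs, hmem, h⟩
    obtain ⟨hlen, hchild⟩ := forall₂_iff_exists_get.1 h
    exact .node hmem hlen hchild

theorem acceptsH_node_iff {q : Q} {a : Sym} {ts : List (TTree (Sym ⊕ Q))} :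
    AcceptsH δ q (.node (.inl a) ts) ↔
      ∃ qs, (q, a, qs) ∈ δ ∧ Forall₂ (AcceptsH δ) qs ts := by
  constructor
  · intro h
    cases h with
    | node hmem hlen hchild => exact ⟨_, hmem, forall₂_iff_exists_get.2 ⟨hlen, hchild⟩⟩
  · rintro ⟨qs, hmem, h⟩
    obtain ⟨hlen, hchild⟩ := forall₂_iff_exists_get.1 h
    exact .node hmem hlen hchild

theorem acceptsH_leafQ_iff {p q : Q} : AcceptsH δ q (leafQ p) ↔ q = p := by
  constructor
  · rintro ⟨⟩
    rfl
  · rintro rfl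
    exact .hole q

theorem Accepts.mono {δ' : Set (Q × Sym × List Q)} (hδ : δ ⊆ δ') {q : Q} {t : TTree Sym}
    (h : Accepts δ q t) : Accepts δ' q t := by
  induction h with
  | node hmem hlen _ ih => exact .node (hδ hmem) hlen ih

theorem accepts_of_acceptsH_map_inl {q : Q} {t : TTree Sym}
    (h : AcceptsH δ q (t.map Sum.inl)) : Accepts δ q t := by
  induction t using TTree.rec
    (motive_2 := fun ts => ∀ qs, Forall₂ (AcceptsH δ) qs (ts.map (TTree.map Sum.inl)) →
      Forall₂ (Accepts δ) qs ts) generalizing q with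
  | node a ts ih =>
    obtain ⟨qs, hmem, hts⟩ := acceptsH_node_iff.1 (TTree.map_node _ a ts ▸ h)
    exact accepts_node_iff.2 ⟨qs, hmem, ih qs hts⟩
  | nil =>
    rename_i h
    cases h
    exact .nil
  | cons t ts iht ihts =>
    rename_i qs h
    obtain ⟨q, qs, hq, hqs, rfl⟩ := forall₂_cons_right_iff.1 h
    exact .cons (iht hq) (ihts qs hqs)

theorem AcceptsH.fill_of_imp {u v : TTree (Sym ⊕ Q)}
    (huv : ∀ p, AcceptsH δ p u → AcceptsH δ p v)
    (C : Ctx Q Sym) {q : Q} (h : AcceptsH δ q (fill C u)) : AcceptsH δ q (fill C v) := by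
  induction C generalizing q with
  | hole => exact huv q h
  | node a l C r ih =>
    obtain ⟨qs, hmem, hts⟩ := acceptsH_node_iff.1 h
    exact acceptsH_node_iff.2 ⟨qs, hmem, forall₂_append_cons_of_imp (fun _ => ih) hts⟩

end Runs

section UpwardInclusion

variable {Q Sym : Type} (A : TDTA Q Sym)

def UpLeTree (u v : TTree (Sym ⊕ Q)) : Prop :=
  ∀ C : Ctx Q Sym, AccLangH A (fill C u) → AccLangH A (fill C v)

variable {A}

@[refl]
theorem UpLeTree.refl (u : TTree (Sym ⊕ Q)) : UpLeTree A u u :=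
  fun _ h => h

theorem UpLeTree.trans {u v w : TTree (Sym ⊕ Q)} (huv : UpLeTree A u v) (hvw : UpLeTree A v w) :
    UpLeTree A u w :=
  fun C h => hvw C (huv C h)

instance : Trans (UpLeTree A) (UpLeTree A) (UpLeTree A) :=
  ⟨UpLeTree.trans⟩

theorem UpLeTree.fill {u v : TTree (Sym ⊕ Q)} (huv : UpLeTree A u v) (D : Ctx Q Sym) :
    UpLeTree A (fill D u) (fill D v) :=
  fun C h => by simpa only [Ctx.fill_comp] using huv (C.comp D) (by rwa [Ctx.fill_comp])

theorem UpLeTree.node_append {a : Sym} {us vs : List (TTree (Sym ⊕ Q))}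
    (h : Forall₂ (UpLeTree A) us vs) (l : List (TTree (Sym ⊕ Q))) :
    UpLeTree A (.node (.inl a) (l ++ us)) (.node (.inl a) (l ++ vs)) := by
  induction h generalizing l with
  | nil => rfl
  | @cons u v us vs huv _ ih =>
    calc UpLeTree A _ (.node (.inl a) (l ++ v :: us)) := huv.fill (.node a l .hole us)
      UpLeTree A _ _ := by simpa only [append_assoc, singleton_append] using ih (l ++ [v])

theorem UpLeTree.node {a : Sym} {us vs : List (TTree (Sym ⊕ Q))}
    (h : Forall₂ (UpLeTree A) us vs) :
    UpLeTree A (.node (.inl a) us) (.node (.inl a) vs) :=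
  UpLeTree.node_append h []

theorem upLeTree_leafQ_of_acceptsH {p : Q} {u : TTree (Sym ⊕ Q)} (hu : AcceptsH A.delta p u) :
    UpLeTree A (leafQ p) u := by
  rintro C ⟨i, hi, h⟩
  refine ⟨i, hi, h.fill_of_imp (fun q hq => ?_) C⟩
  rwa [acceptsH_leafQ_iff.1 hq]

end UpwardInclusion

section Saturation

variable {Q Sym : Type} {A : TDTA Q Sym}

theorem srel_refl {Rs Rt : Q → Q → Prop} (hs : ∀ q, Rs q q) (ht : ∀ q, Rt q q)
    (t : Q × Sym × List Q) : Srel Rs Rt t t :=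
  ⟨rfl, hs t.1, forall₂_same.2 fun q _ => ht q⟩

theorem lang_subset_lang_satAut {S : Q × Sym × List Q → Q × Sym × List Q → Prop}
    (hS : ∀ t, S t t) : Lang A ⊆ Lang (satAut A S) :=
  fun _ ⟨i, hi, hrun⟩ =>
    ⟨i, hi, hrun.mono fun t ht => show ∃ t' ∈ A.delta, S t t' from ⟨t, ht, hS t⟩⟩

theorem upLeId_refl (q : Q) : upLeId A q q :=
  UpLeTree.refl _

theorem upLeTree_map_inl_of_accepts_satAut {q : Q} {t : TTree Sym}
    (h : Accepts (satAut A (Srel (upLeId A) (flip (upLeId A)))).delta q t) :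
    UpLeTree A (leafQ q) (t.map Sum.inl) := by
  induction h with
  | @node q a qs ts hmem hlen _ ih =>
    obtain ⟨⟨q', _, qs'⟩, hmem', rfl, hq, hqs⟩ := hmem
    have hih : Forall₂ (fun r t => UpLeTree A (leafQ r) (TTree.map Sum.inl t)) qs ts :=
      forall₂_iff_exists_get.2 ⟨hlen, ih⟩
    have hrun : AcceptsH A.delta q' (.node (.inl a) (qs'.map leafQ)) :=
      acceptsH_node_iff.2
        ⟨qs', hmem', forall₂_map_right_iff.2 (forall₂_same.2 fun r _ => .hole r)⟩
    calc UpLeTree A (leafQ q) (leafQ q') := hq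
      UpLeTree A _ (.node (.inl a) (qs'.map leafQ)) := upLeTree_leafQ_of_acceptsH hrun
      UpLeTree A _ (.node (.inl a) (qs.map leafQ)) :=
        UpLeTree.node (forall₂_map_left_iff.2 (forall₂_map_right_iff.2 hqs.flip))
      UpLeTree A _ (.node (.inl a) (ts.map (TTree.map Sum.inl))) :=
        UpLeTree.node (forall₂_map_left_iff.2 (forall₂_map_right_iff.2 hih))
      UpLeTree A _ _ := by rw [TTree.map_node]

end Saturation

/-- `S(⊑up(id), ⊒up(id))` is good for saturation: adding a
transition `⟨p,σ,r₁…rₙ⟩` whenever there exists `⟨p',σ,r₁'…rₙ'⟩ ∈ δ` with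
`p ⊑up(id) p'` and `rᵢ' ⊑up(id) rᵢ` for all `i` preserves the language. -/
theorem stmt14 {Q Sym : Type} (A : TDTA Q Sym) :
    Lang (satAut A (Srel (fun p p' => upLeId A p p')
      (fun r r' => upLeId A r' r))) = Lang A := by
  refine Set.Subset.antisymm (fun t ⟨i, hi, hrun⟩ => ?_)
    (lang_subset_lang_satAut (srel_refl upLeId_refl upLeId_refl))
  obtain ⟨j, hj, hrun'⟩ :=
    upLeTree_map_inl_of_accepts_satAut hrun .hole ⟨i, hi, .hole i⟩
  exact ⟨j, hj, accepts_of_acceptsH_map_inl hrun'⟩
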